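/- arXiv:1405.4929 — 2 statements merged into one kernel-verified Lean document; each statement's English description precedes it below -/
import Mathlib

section
/- Let P = (A,B,R) and Q = (C,B,T) be relations. Then ONE has a winning strategy in the game G(P,Q) if and only if ONE has a winning strategy in the game G(P_{ℵ₀}, Q_{ℵ₀}), where P_{ℵ₀} and Q_{ℵ₀} are the ℵ₀-modifications of P and Q. -/
/-!
A winning strategy `σ` for ONE in `G(P,Q)` is run in `G(P_ℵ₀, Q_ℵ₀)` by dovetailing: the countable
answers `E₀, E₁, …` are enumerated, and at round `⟨m, k⟩ + 1` ONE plays what `σ` plays after the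
history of round `m` extended by the `k`-th element of `Eₘ`. If no `Eₘ` were wholly dominated by
some `c`, choosing in each `Eₘ` an element not dominated by `c` would give a branch of this tree,
which is a play against `σ` whose range does not dominate `c`. Conversely, a strategy for ONE in
`G(P_ℵ₀, Q_ℵ₀)` is used in `G(P,Q)` by reading each answer `b` as the singleton `{b}`.
-/

open Set

/-- `GDom R` is the set of dominating families of the relation `R`:
sets `Z ⊆ B` such that every `a ∈ A` is dominated by some `b ∈ Z`. -/
def GDom {α β : Type*} (R : α → β → Prop) : Set (Set β) :=
  {Z | ∀ a : α, ∃ b ∈ Z, R a b}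

/-- A relation is total: every element of the domain is dominated by something. -/
def IsTotalRel {α β : Type*} (R : α → β → Prop) : Prop :=
  ∀ a : α, ∃ b : β, R a b

/-- The product of two relations. -/
def GProd {α β α' β' : Type*} (R : α → β → Prop) (R' : α' → β' → Prop) :
    α × α' → β × β' → Prop :=
  fun a b => R a.1 b.1 ∧ R' a.2 b.2

/-- The finite history consisting of the first `n` moves of the sequence `b`. -/
def GHist {β : Type*} (b : ℕ → β) (n : ℕ) : List β :=
  List.ofFn fun i : Fin n => b i

/-- ONE has a winning strategy in the game `G(P,Q)`: in inning `n` ONE plays `aₙ ∈ A`,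
TWO answers `bₙ` with `R aₙ bₙ`; ONE wins iff `{bₙ : n} ∈ GDom T`. -/
def OneWinsG {α β γ : Type*} (R : α → β → Prop) (T : γ → β → Prop) : Prop :=
  ∃ σ : List β → α, ∀ b : ℕ → β,
    (∀ n, R (σ (GHist b n)) (b n)) → Set.range b ∈ GDom T

/-- TWO has a winning strategy in the game `G(P,Q)`. -/
def TwoWinsG {α β γ : Type*} (R : α → β → Prop) (T : γ → β → Prop) : Prop :=
  ∃ τ : List α → β, ∀ a : ℕ → α,
    (∀ n, R (a n) (τ (GHist a (n + 1)))) ∧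
    Set.range (fun n => τ (GHist a (n + 1))) ∉ GDom T

/-- ONE has a winning strategy in the game `G₁(𝒜,ℬ)`: in inning `n` ONE plays `Aₙ ∈ 𝒜`,
TWO answers `bₙ ∈ Aₙ`; TWO wins iff `{bₙ : n} ∈ ℬ`. -/
def OneWinsG1 {β : Type*} (𝒜 ℬ : Set (Set β)) : Prop :=
  ∃ σ : List β → Set β, (∀ h, σ h ∈ 𝒜) ∧
    ∀ b : ℕ → β, (∀ n, b n ∈ σ (GHist b n)) → Set.range b ∉ ℬ

/-- TWO has a winning strategy in the game `G₁(𝒜,ℬ)`. -/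
def TwoWinsG1 {β : Type*} (𝒜 ℬ : Set (Set β)) : Prop :=
  ∃ τ : List (Set β) → β, ∀ S : ℕ → Set β, (∀ n, S n ∈ 𝒜) →
    (∀ n, τ (GHist S (n + 1)) ∈ S n) ∧
    Set.range (fun n => τ (GHist S (n + 1))) ∈ ℬ

/-- TWO has a winning strategy in the game `G_fin(𝒜,ℬ)`: in inning `n` ONE plays `Aₙ ∈ 𝒜`,
TWO answers a finite `Fₙ ⊆ Aₙ`; TWO wins iff `⋃ₙ Fₙ ∈ ℬ`. -/
def TwoWinsGfin {β : Type*} (𝒜 ℬ : Set (Set β)) : Prop :=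
  ∃ τ : List (Set β) → Set β, ∀ S : ℕ → Set β, (∀ n, S n ∈ 𝒜) →
    (∀ n, τ (GHist S (n + 1)) ⊆ S n ∧ (τ (GHist S (n + 1))).Finite) ∧
    (⋃ n, τ (GHist S (n + 1))) ∈ ℬ

/-- `(𝒜,ℬ)`-Lindelöf: every member of `𝒜` has a countable subset belonging to `ℬ`. -/
def LindelofFam {β : Type*} (𝒜 ℬ : Set (Set β)) : Prop :=
  ∀ S ∈ 𝒜, ∃ C ⊆ S, C.Countable ∧ C ∈ ℬ

/-- The selection principle `S₁(𝒜,ℬ)`. -/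
def SelS1 {β : Type*} (𝒜 ℬ : Set (Set β)) : Prop :=
  ∀ A : ℕ → Set β, (∀ n, A n ∈ 𝒜) →
    ∃ b : ℕ → β, (∀ n, b n ∈ A n) ∧ Set.range b ∈ ℬ

/-- The selection principle `S_fin(𝒜,ℬ)`. -/
def SelSfin {β : Type*} (𝒜 ℬ : Set (Set β)) : Prop :=
  ∀ A : ℕ → Set β, (∀ n, A n ∈ 𝒜) →
    ∃ F : ℕ → Set β, (∀ n, F n ⊆ A n ∧ (F n).Finite) ∧ (⋃ n, F n) ∈ ℬ

/-- `𝒪_X`: the family of open covers of `X`. -/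
def OpenCovers (X : Type*) [TopologicalSpace X] : Set (Set (Set X)) :=
  {𝒰 | (∀ U ∈ 𝒰, IsOpen U) ∧ ⋃₀ 𝒰 = Set.univ}

/-- ONE has a winning strategy in the point-open game on `X`. -/
def OneWinsPointOpen (X : Type*) [TopologicalSpace X] : Prop :=
  ∃ σ : List (Set X) → X, ∀ U : ℕ → Set X,
    (∀ n, IsOpen (U n) ∧ σ (GHist U n) ∈ U n) → Set.range U ∈ OpenCovers X

/-- TWO has a winning strategy in the point-open game on `X`. -/
def TwoWinsPointOpen (X : Type*) [TopologicalSpace X] : Prop :=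
  ∃ τ : List X → Set X, ∀ x : ℕ → X,
    (∀ n, IsOpen (τ (GHist x (n + 1))) ∧ x n ∈ τ (GHist x (n + 1))) ∧
    Set.range (fun n => τ (GHist x (n + 1))) ∉ OpenCovers X

/-- `𝔇_X`: the family of dense subsets of `X`. -/
def DenseSets (X : Type*) [TopologicalSpace X] : Set (Set X) :=
  {D | Dense D}

/-- ONE has a winning strategy in the point-picking game `G^D_ω(X)` of Berner and Juhász. -/
def OneWinsPointPicking (X : Type*) [TopologicalSpace X] : Prop :=
  ∃ σ : List X → Set X, (∀ h, IsOpen (σ h) ∧ (σ h).Nonempty) ∧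
    ∀ x : ℕ → X, (∀ n, x n ∈ σ (GHist x n)) → Dense (Set.range x)

/-- TWO has a winning strategy in the point-picking game `G^D_ω(X)`. -/
def TwoWinsPointPicking (X : Type*) [TopologicalSpace X] : Prop :=
  ∃ τ : List (Set X) → X, ∀ U : ℕ → Set X,
    (∀ n, IsOpen (U n) ∧ (U n).Nonempty) →
    (∀ n, τ (GHist U (n + 1)) ∈ U n) ∧
    ¬ Dense (Set.range fun n => τ (GHist U (n + 1)))

/-- `𝒟_X`: families of open sets whose union is dense in `X`. -/
def DenseUnionFams (X : Type*) [TopologicalSpace X] : Set (Set (Set X)) :=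
  {𝒰 | (∀ U ∈ 𝒰, IsOpen U) ∧ Dense (⋃₀ 𝒰)}

/-- ONE has a winning strategy in Tkachuk's game `θ(X)`. -/
def OneWinsTheta (X : Type*) [TopologicalSpace X] : Prop :=
  ∃ σ : List (Set X) → X, ∀ U : ℕ → Set X,
    (∀ n, IsOpen (U n) ∧ σ (GHist U n) ∈ U n) → Dense (⋃ n, U n)

/-- TWO has a winning strategy in Tkachuk's game `θ(X)`. -/
def TwoWinsTheta (X : Type*) [TopologicalSpace X] : Prop :=
  ∃ τ : List X → Set X, ∀ x : ℕ → X,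
    (∀ n, IsOpen (τ (GHist x (n + 1))) ∧ x n ∈ τ (GHist x (n + 1))) ∧
    ¬ Dense (⋃ n, τ (GHist x (n + 1)))

/-- `Ω_x`: the family of subsets of `X` having `x` in their closure. -/
def OmegaPt {X : Type*} [TopologicalSpace X] (x : X) : Set (Set X) :=
  {A | x ∈ closure A}

/-- ONE has a winning strategy in Gruenhage's game `G^c_{O,P}(X,x)`. -/
def OneWinsGruenhage {X : Type*} [TopologicalSpace X] (x : X) : Prop :=
  ∃ σ : List X → Set X, (∀ h, IsOpen (σ h) ∧ x ∈ σ h) ∧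
    ∀ y : ℕ → X, (∀ n, y n ∈ σ (GHist y n)) → x ∈ closure (Set.range y)

/-- TWO has a winning strategy in Gruenhage's game `G^c_{O,P}(X,x)`. -/
def TwoWinsGruenhage {X : Type*} [TopologicalSpace X] (x : X) : Prop :=
  ∃ τ : List (Set X) → X, ∀ V : ℕ → Set X,
    (∀ n, IsOpen (V n) ∧ x ∈ V n) →
    (∀ n, τ (GHist V (n + 1)) ∈ V n) ∧
    x ∉ closure (Set.range fun n => τ (GHist V (n + 1)))

/-- ONE has a winning strategy in the compact-open game on `X`. -/
def OneWinsCompactOpen (X : Type*) [TopologicalSpace X] : Prop :=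
  ∃ σ : List (Set X) → Set X, (∀ h, IsCompact (σ h)) ∧
    ∀ U : ℕ → Set X, (∀ n, IsOpen (U n) ∧ σ (GHist U n) ⊆ U n) →
      (⋃ n, U n) = Set.univ

/-- `⪯` is downwards `P`-compatible. -/
def DownwardsCompat {α β : Type*} (R : α → β → Prop) (le : β → β → Prop) : Prop :=
  ∀ a b₁ b₂, R a b₁ → R a b₂ → ∃ b, R a b ∧ le b b₁ ∧ le b b₂

/-- `⪯` is upwards `Q`-compatible. -/
def UpwardsCompat {γ β : Type*} (T : γ → β → Prop) (le : β → β → Prop) : Prop :=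
  ∀ c b₁ b₂, T c b₁ → le b₁ b₂ → T c b₂

/-- `⪯` is countably downwards `P`-compatible. -/
def CountablyDownwardsCompat {α β : Type*} (R : α → β → Prop) (le : β → β → Prop) : Prop :=
  ∀ a, ∀ E : Set β, E.Countable → E.Nonempty → (∀ b ∈ E, R a b) →
    ∃ b', R a b' ∧ ∀ b ∈ E, le b' b

/-- A relation is `ℵ₀`-preserving if some partial order on `B` is both upwards
compatible and countably downwards compatible with it. -/
def Aleph0Preserving {α β : Type*} (R : α → β → Prop) : Prop :=
  ∃ le : β → β → Prop, IsPartialOrder β le ∧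
    UpwardsCompat R le ∧ CountablyDownwardsCompat R le

/-- `Dom_γ(T)`: the γ-dominating sequences of the relation `T`. -/
def GDomGamma {γ β : Type*} (T : γ → β → Prop) : Set (ℕ → β) :=
  {z | ∀ c : γ, {n : ℕ | ¬ T c (z n)}.Finite}

/-- ONE has a winning strategy in the game `G_γ(P,Q)`. -/
def OneWinsGgamma {α β γ : Type*} (R : α → β → Prop) (T : γ → β → Prop) : Prop :=
  ∃ σ : List β → α, ∀ b : ℕ → β,
    (∀ n, R (σ (GHist b n)) (b n)) → b ∈ GDomGamma T

/-- TWO has a winning strategy in the game `G_γ(P,Q)`. -/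
def TwoWinsGgamma {α β γ : Type*} (R : α → β → Prop) (T : γ → β → Prop) : Prop :=
  ∃ τ : List α → β, ∀ a : ℕ → α,
    (∀ n, R (a n) (τ (GHist a (n + 1)))) ∧
    (fun n => τ (GHist a (n + 1))) ∉ GDomGamma T

/-- ONE has a winning strategy in the game `G₁(𝒜, Dom_γ(T))`. -/
def OneWinsG1gamma {β γ : Type*} (𝒜 : Set (Set β)) (T : γ → β → Prop) : Prop :=
  ∃ σ : List β → Set β, (∀ h, σ h ∈ 𝒜) ∧
    ∀ b : ℕ → β, (∀ n, b n ∈ σ (GHist b n)) → b ∉ GDomGamma T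

/-- TWO has a winning strategy in the game `G₁(𝒜, Dom_γ(T))`. -/
def TwoWinsG1gamma {β γ : Type*} (𝒜 : Set (Set β)) (T : γ → β → Prop) : Prop :=
  ∃ τ : List (Set β) → β, ∀ S : ℕ → Set β, (∀ n, S n ∈ 𝒜) →
    (∀ n, τ (GHist S (n + 1)) ∈ S n) ∧
    (fun n => τ (GHist S (n + 1))) ∈ GDomGamma T

/-- The `ℵ₀`-modification of a relation: moves become nonempty countable subsets of `B`,
dominated pointwise. -/
def CountMod {α β : Type*} (R : α → β → Prop) :
    α → {E : Set β // E.Countable ∧ E.Nonempty} → Prop :=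
  fun a E => ∀ b ∈ E.1, R a b

abbrev NonemptyCountableSet (β : Type*) := {E : Set β // E.Countable ∧ E.Nonempty}

namespace NonemptyCountableSet

variable {β : Type*}

def singleton (b : β) : NonemptyCountableSet β :=
  ⟨{b}, countable_singleton b, singleton_nonempty b⟩

noncomputable def enum (E : NonemptyCountableSet β) : ℕ → β :=
  (E.2.1.exists_eq_range E.2.2).choose

theorem range_enum (E : NonemptyCountableSet β) : range (enum E) = E.1 :=
  (E.2.1.exists_eq_range E.2.2).choose_spec.symm

theorem enum_mem (E : NonemptyCountableSet β) (k : ℕ) : enum E k ∈ E.1 :=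
  range_enum E ▸ mem_range_self k

instance [IsEmpty β] : IsEmpty (NonemptyCountableSet β) :=
  ⟨fun E => E.2.2.ne_empty (eq_empty_of_isEmpty _)⟩

instance [Nonempty β] : Nonempty (NonemptyCountableSet β) :=
  ⟨singleton (Classical.arbitrary β)⟩

end NonemptyCountableSet

open NonemptyCountableSet

section GHist

variable {β : Type*}

@[simp]
theorem length_GHist (b : ℕ → β) (n : ℕ) : (GHist b n).length = n :=
  List.length_ofFn

theorem GHist_zero (b : ℕ → β) : GHist b 0 = [] := rfl

theorem GHist_succ (b : ℕ → β) (n : ℕ) : GHist b (n + 1) = GHist b n ++ [b n] :=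
  List.ofFn_succ_last

theorem map_GHist {β' : Type*} (f : β → β') (b : ℕ → β) (n : ℕ) :
    (GHist b n).map f = GHist (f ∘ b) n :=
  List.map_ofFn

theorem getD_GHist (b : ℕ → β) {m n : ℕ} (hm : m < n) (d : β) : (GHist b n).getD m d = b m := by
  rw [List.getD_eq_getElem _ _ (by simpa using hm)]
  simp [GHist]

end GHist

section Dovetail

variable {β : Type*}

/-- Round `n + 1`, with `n = ⟨m, k⟩`, extends the history of round `m` by the `k`-th element
of `E m`. -/
noncomputable def dovetailHist (E : ℕ → NonemptyCountableSet β) : ℕ → List β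
  | 0 => []
  | n + 1 => dovetailHist E n.unpair.1 ++ [enum (E n.unpair.1) n.unpair.2]
  decreasing_by exact Nat.lt_succ_of_le (Nat.unpair_left_le n)

theorem dovetailHist_pair_succ (E : ℕ → NonemptyCountableSet β) (m k : ℕ) :
    dovetailHist E (Nat.pair m k + 1) = dovetailHist E m ++ [enum (E m) k] := by
  rw [dovetailHist, Nat.unpair_pair]

theorem dovetailHist_congr {E E' : ℕ → NonemptyCountableSet β} {n : ℕ}
    (h : ∀ m < n, E m = E' m) : dovetailHist E n = dovetailHist E' n := by
  induction n using Nat.strong_induction_on with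
  | _ n ih =>
    match n with
    | 0 => rw [dovetailHist, dovetailHist]
    | n + 1 =>
      have hm : n.unpair.1 < n + 1 := Nat.lt_succ_of_le (Nat.unpair_left_le n)
      rw [dovetailHist, dovetailHist, ih _ hm fun m hmn => h m (hmn.trans hm), h _ hm]

/-- The rounds visited by the branch choosing the `k m`-th element of `E m` after round `m`. -/
def dovetailPath (k : ℕ → ℕ) : ℕ → ℕ
  | 0 => 0
  | j + 1 => Nat.pair (dovetailPath k j) (k (dovetailPath k j)) + 1

theorem GHist_dovetailPath (E : ℕ → NonemptyCountableSet β) (k : ℕ → ℕ) (j : ℕ) :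
    GHist (fun i => enum (E (dovetailPath k i)) (k (dovetailPath k i))) j =
      dovetailHist E (dovetailPath k j) := by
  induction j with
  | zero => rw [GHist_zero, dovetailPath, dovetailHist]
  | succ j ih => rw [GHist_succ, ih, dovetailPath, dovetailHist_pair_succ]

end Dovetail

section Games

variable {α β γ : Type*} {R : α → β → Prop} {T : γ → β → Prop}

/-- The padding `d` only fills rounds not yet played, on which the dovetailed history does not
depend. -/
noncomputable def dovetailStrategy (σ : List β → α) (d : NonemptyCountableSet β)
    (L : List (NonemptyCountableSet β)) : α :=
  σ (dovetailHist (fun i => L.getD i d) L.length)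

theorem dovetailStrategy_GHist (σ : List β → α) (d : NonemptyCountableSet β)
    (E : ℕ → NonemptyCountableSet β) (n : ℕ) :
    dovetailStrategy σ d (GHist E n) = σ (dovetailHist E n) := by
  rw [dovetailStrategy, length_GHist]
  exact congrArg σ (dovetailHist_congr fun m hm => getD_GHist E hm d)

theorem OneWinsG.countMod [Nonempty β] (h : OneWinsG R T) :
    OneWinsG (CountMod R) (CountMod T) := by
  obtain ⟨σ, hσ⟩ := h
  refine ⟨dovetailStrategy σ (Classical.arbitrary _), fun E hE c => ?_⟩
  by_contra hc
  have hbad : ∀ m, ∃ k, ¬ T c (enum (E m) k) := by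
    intro m
    obtain ⟨b, hbE, hb⟩ : ∃ b ∈ (E m).1, ¬ T c b := by
      simpa [CountMod] using fun h => hc ⟨E m, mem_range_self m, h⟩
    obtain ⟨k, rfl⟩ := range_enum (E m) ▸ hbE
    exact ⟨k, hb⟩
  choose k hk using hbad
  set b := fun i => enum (E (dovetailPath k i)) (k (dovetailPath k i))
  have hplay : ∀ j, R (σ (GHist b j)) (b j) := fun j => by
    rw [GHist_dovetailPath, ← dovetailStrategy_GHist σ (Classical.arbitrary _)]
    exact hE _ _ (enum_mem _ _)
  obtain ⟨_, ⟨j, rfl⟩, hj⟩ := hσ b hplay c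
  exact hk _ hj

theorem OneWinsG.of_countMod (h : OneWinsG (CountMod R) (CountMod T)) : OneWinsG R T := by
  obtain ⟨σ, hσ⟩ := h
  refine ⟨fun L => σ (L.map singleton), fun b hb c => ?_⟩
  have hplay : ∀ n, CountMod R (σ (GHist (singleton ∘ b) n)) (singleton (b n)) := by
    rintro n _ rfl
    simpa [map_GHist] using hb n
  obtain ⟨_, ⟨n, rfl⟩, hn⟩ := hσ (singleton ∘ b) hplay c
  exact ⟨b n, mem_range_self n, hn _ rfl⟩

theorem oneWinsG_of_isEmpty [Nonempty α] [IsEmpty β] : OneWinsG R T :=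
  ⟨fun _ => Classical.arbitrary α, fun b => isEmptyElim (b 0)⟩

end Games

theorem statement18_general {α β γ : Type*} [Nonempty α]
    (R : α → β → Prop) (T : γ → β → Prop) :
    OneWinsG R T ↔ OneWinsG (CountMod R) (CountMod T) := by
  refine ⟨fun h => ?_, OneWinsG.of_countMod⟩
  rcases isEmpty_or_nonempty β with hβ | hβ
  · exact oneWinsG_of_isEmpty
  · exact h.countMod

/-- ONE has a winning strategy in `G(P,Q)` iff ONE has a winning strategy
in `G(P_{ℵ₀}, Q_{ℵ₀})`, the game on the `ℵ₀`-modifications. -/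
theorem statement18 {α β γ : Type*} [Nonempty α] [Nonempty γ]
    (R : α → β → Prop) (T : γ → β → Prop)
    (hR : IsTotalRel R) (hT : IsTotalRel T) :
    OneWinsG R T ↔ OneWinsG (CountMod R) (CountMod T) :=
  statement18_general R T
end

section
/- Let P = (A,B,R) be an ℵ₀-preserving relation. Then the following are equivalent: (a) Dom(P)-Lindelöf holds, i.e., every member of Dom(P) has a countable subset in Dom(P); (b) S_1(Dom(P), Dom(P)) holds; (c) ONE does not have a winning strategy in the game G_1(Dom(P), Dom(P)). -/
open Set

/-- Legal histories of length `n` when TWO picks from `C l` after history `l`. -/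
def LegalSet {β : Type*} (C : List β → Set β) : ℕ → Set (List β)
  | 0 => {([] : List β)}
  | (n + 1) => ⋃ l ∈ LegalSet C n, (fun x => l ++ [x]) '' C l

lemma legalSet_countable {β : Type*} (C : List β → Set β)
    (hC : ∀ l, (C l).Countable) : ∀ n, (LegalSet C n).Countable := by
  intro n
  induction n with
  | zero => simpa [LegalSet] using Set.countable_singleton ([] : List β)
  | succ n ih => exact ih.biUnion fun l _ => (hC l).image _

lemma gHist_succ {β : Type*} (b : ℕ → β) (n : ℕ) :
    GHist b (n + 1) = GHist b n ++ [b n] := by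
  rw [GHist, GHist, List.ofFn_succ']
  simp [List.concat_eq_append]

/-- The hard direction: Lindelöf plus `ℵ₀`-preserving implies ONE has no winning
strategy in `G₁(Dom(P), Dom(P))`. -/
lemma lindelof_to_noOneWins {α β : Type*} [Nonempty α]
    (R : α → β → Prop) (hpres : Aleph0Preserving R)
    (hlin : LindelofFam (GDom R) (GDom R)) :
    ¬ OneWinsG1 (GDom R) (GDom R) := by
  rintro ⟨σ, hσ, hwin⟩
  obtain ⟨le, _hpo, hup, hcd⟩ := hpres
  -- choose countable dominating subsets of ONE's moves
  have hC : ∀ h : List β, ∃ C ⊆ σ h, C.Countable ∧ C ∈ GDom R :=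
    fun h => hlin (σ h) (hσ h)
  choose C hCsub hCcount hCdom using hC
  -- the countable set of legal histories
  set 𝕃 : Set (List β) := ⋃ n, LegalSet C n with h𝕃
  have h𝕃c : 𝕃.Countable := Set.countable_iUnion (legalSet_countable C hCcount)
  have h𝕃ne : ([] : List β) ∈ 𝕃 := Set.mem_iUnion.2 ⟨0, by simp [LegalSet]⟩
  -- canonical witnesses: for each `a` and history `l`, an element of `C l` related to `a`
  have hex : ∀ (a : α) (l : List β), ∃ x ∈ C l, R a x := fun a l => hCdom l a
  choose ext hext1 hext2 using hex
  -- compress all canonical witnesses along legal histories into one element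
  have hμ : ∀ a : α, ∃ μ, R a μ ∧ ∀ l ∈ 𝕃, le μ (ext a l) := by
    intro a
    obtain ⟨μ, hμ1, hμ2⟩ := hcd a ((fun l => ext a l) '' 𝕃) (h𝕃c.image _)
      ⟨ext a [], ⟨[], h𝕃ne, rfl⟩⟩ (by rintro b ⟨l, -, rfl⟩; exact hext2 a l)
    exact ⟨μ, hμ1, fun l hl => hμ2 _ ⟨l, hl, rfl⟩⟩
  choose μ hμ1 hμ2 using hμ
  -- the set of elements below some member of `C l` for every legal `l` is dominating
  set Zs : Set β := {z | ∀ l ∈ 𝕃, ∃ x ∈ C l, le z x} with hZs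
  have hZsDom : Zs ∈ GDom R :=
    fun a => ⟨μ a, fun l hl => ⟨ext a l, hext1 a l, hμ2 a l hl⟩, hμ1 a⟩
  obtain ⟨Z', hZ'sub, hZ'c, hZ'dom⟩ := hlin Zs hZsDom
  have hZ'ne : Z'.Nonempty := by
    obtain ⟨a0⟩ := ‹Nonempty α›
    obtain ⟨z0, hz0, -⟩ := hZ'dom a0
    exact ⟨z0, hz0⟩
  obtain ⟨z, hz⟩ := hZ'c.exists_eq_range hZ'ne
  have hzZs : ∀ k, z k ∈ Zs := fun k => hZ'sub (hz ▸ Set.mem_range_self k)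
  -- at stage `k`, from a legal history `l`, TWO can play above `z k`
  have hstep : ∀ (k : ℕ) (l : List β), ∃ x ∈ C l, (l ∈ 𝕃 → le (z k) x) := by
    intro k l
    by_cases hl : l ∈ 𝕃
    · obtain ⟨x, hx, hlex⟩ := hzZs k l hl
      exact ⟨x, hx, fun _ => hlex⟩
    · obtain ⟨a0⟩ := ‹Nonempty α›
      exact ⟨ext a0 l, hext1 a0 l, fun h => absurd h hl⟩
  choose step hstep1 hstep2 using hstep
  -- the diagonal play
  set H : ℕ → List β := fun n => Nat.rec [] (fun k Hk => Hk ++ [step k Hk]) n with hH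
  set b : ℕ → β := fun n => step n (H n) with hb
  have hHsucc : ∀ n, H (n + 1) = H n ++ [b n] := fun n => rfl
  have hHlegal : ∀ n, H n ∈ LegalSet C n := by
    intro n
    induction n with
    | zero => simp [hH, LegalSet]
    | succ n ih =>
      rw [hHsucc]
      exact Set.mem_biUnion ih ⟨b n, hstep1 n (H n), rfl⟩
  have hH𝕃 : ∀ n, H n ∈ 𝕃 := fun n => Set.mem_iUnion.2 ⟨n, hHlegal n⟩
  have hGH : ∀ n, GHist b n = H n := by
    intro n
    induction n with
    | zero => simp only [GHist, List.ofFn_zero]; rfl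
    | succ n ih => rw [gHist_succ, ih, hHsucc]
  -- the play is legal
  have hlegal : ∀ n, b n ∈ σ (GHist b n) := by
    intro n
    rw [hGH]
    exact hCsub (H n) (hstep1 n (H n))
  -- and its range is dominating
  have hdom : Set.range b ∈ GDom R := by
    intro a
    obtain ⟨z', hz', hRz'⟩ := hZ'dom a
    obtain ⟨k, rfl⟩ := hz ▸ hz'
    exact ⟨b k, Set.mem_range_self k, hup a (z k) (b k) hRz' (hstep2 k (H k) (hH𝕃 k))⟩
  exact hwin b hlegal hdom

/-- For an `ℵ₀`-preserving relation `P`, the following are equivalent: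
(a) `Dom(P)`-Lindelöf; (b) `S₁(Dom(P), Dom(P))`; (c) ONE has no winning strategy in
`G₁(Dom(P), Dom(P))`. -/
theorem statement19 {α β : Type*} [Nonempty α]
    (R : α → β → Prop) (hR : IsTotalRel R)
    (hpres : Aleph0Preserving R) :
    (LindelofFam (GDom R) (GDom R) ↔ SelS1 (GDom R) (GDom R)) ∧
    (SelS1 (GDom R) (GDom R) ↔ ¬ OneWinsG1 (GDom R) (GDom R)) := by
  have hac : LindelofFam (GDom R) (GDom R) → ¬ OneWinsG1 (GDom R) (GDom R) :=
    lindelof_to_noOneWins R hpres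
  have hcb : ¬ OneWinsG1 (GDom R) (GDom R) → SelS1 (GDom R) (GDom R) := by
    intro h A hA
    by_contra hcon
    push_neg at hcon
    apply h
    refine ⟨fun l => A l.length, fun _ => hA _, ?_⟩
    intro b hb
    exact hcon b fun n => by simpa [GHist, List.length_ofFn] using hb n
  have hba : SelS1 (GDom R) (GDom R) → LindelofFam (GDom R) (GDom R) := by
    intro h S hS
    obtain ⟨b, hb, hbd⟩ := h (fun _ => S) fun _ => hS
    exact ⟨Set.range b, Set.range_subset_iff.2 hb, Set.countable_range b, hbd⟩
  exact ⟨⟨fun ha => hcb (hac ha), hba⟩, fun hb => hac (hba hb), hcb⟩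
end
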